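/- arXiv:0809.3815 — 2 statements merged into one kernel-verified Lean document; each statement's English description precedes it below -/
import Mathlib

section
/- Let A be an algebra in the language of the terms sᵢ, tᵢ and let (a,b,c,d,a₁,b₁,…,aₙ,bₙ) ∈ A^{4+2n}, X⃗ = (a,b,c,d,a₁,b₁,…,aₙ,bₙ). Then, in Con(A), Cg(a,c) ∨ Cg(b,d) ∨ ⋁_{i=1}^{n} Cg(aᵢ, sᵢ(a,b,c,d,a₁,b₁,…,a_{i−1},b_{i−1})) = Cg(X⃗, σ(X⃗)). -/
set_option linter.unusedVariables false

namespace UA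

/-- A purely functional first-order signature (language). -/
structure Sig where
  ops : Type
  ar : ops → ℕ

/-- An algebra over a signature: a carrier together with interpretations of
the basic operations. -/
structure Alg (S : Sig) where
  carrier : Type
  interp : ∀ f : S.ops, (Fin (S.ar f) → carrier) → carrier

/-- Terms over a signature, with variables in `V`. -/
inductive Tm (S : Sig) (V : Type) : Type
  | var : V → Tm S V
  | app : ∀ f : S.ops, (Fin (S.ar f) → Tm S V) → Tm S V

/-- Evaluation of a term in an algebra, under an assignment of the variables. -/
def Tm.eval {S : Sig} {V : Type} (A : Alg S) (v : V → A.carrier) : Tm S V → A.carrier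
  | .var i => v i
  | .app f ts => A.interp f (fun i => Tm.eval A v (ts i))

/-- An algebra satisfies an identity (a universally quantified equation between
two terms in variables `ℕ`). -/
def Alg.satisfies {S : Sig} (A : Alg S) (e : Tm S ℕ × Tm S ℕ) : Prop :=
  ∀ v : ℕ → A.carrier, Tm.eval A v e.1 = Tm.eval A v e.2

/-- Membership in the variety axiomatized by the set of equations `E`. -/
def InV {S : Sig} (E : Set (Tm S ℕ × Tm S ℕ)) (A : Alg S) : Prop :=
  ∀ e ∈ E, A.satisfies e

/-- A congruence of an algebra: an equivalence relation compatible with all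
basic operations. -/
structure Con {S : Sig} (A : Alg S) where
  rel : A.carrier → A.carrier → Prop
  refl : ∀ a, rel a a
  symm : ∀ a b, rel a b → rel b a
  trans : ∀ a b c, rel a b → rel b c → rel a c
  compat : ∀ (f : S.ops) (ts us : Fin (S.ar f) → A.carrier),
      (∀ i, rel (ts i) (us i)) → rel (A.interp f ts) (A.interp f us)

/-- The trivial (equality) congruence Δ. -/
def conDelta {S : Sig} (A : Alg S) : Con A where
  rel a b := a = b
  refl _ := rfl
  symm _ _ h := h.symm
  trans _ _ _ h₁ h₂ := h₁.trans h₂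
  compat f ts us h := congrArg (A.interp f) (funext h)

/-- The total congruence ∇. -/
def conNabla {S : Sig} (A : Alg S) : Con A where
  rel _ _ := True
  refl _ := trivial
  symm _ _ _ := trivial
  trans _ _ _ _ _ := trivial
  compat _ _ _ _ := trivial

/-- The congruence generated by a set of pairs. -/
def cg {S : Sig} {A : Alg S} (s : Set (A.carrier × A.carrier)) : Con A where
  rel a b := ∀ θ : Con A, (∀ p ∈ s, θ.rel p.1 p.2) → θ.rel a b
  refl a := fun θ _ => θ.refl a
  symm _ _ h := fun θ hs => θ.symm _ _ (h θ hs)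
  trans _ _ _ h₁ h₂ := fun θ hs => θ.trans _ _ _ (h₁ θ hs) (h₂ θ hs)
  compat f ts us h := fun θ hs => θ.compat f ts us (fun i => h i θ hs)

/-- The principal congruence generated by a pair. -/
def cgPair {S : Sig} (A : Alg S) (a b : A.carrier) : Con A := cg {(a, b)}

/-- Meet (intersection) in the congruence lattice. -/
def Con.inf {S : Sig} {A : Alg S} (θ φ : Con A) : Con A where
  rel a b := θ.rel a b ∧ φ.rel a b
  refl a := ⟨θ.refl a, φ.refl a⟩
  symm _ _ h := ⟨θ.symm _ _ h.1, φ.symm _ _ h.2⟩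
  trans _ _ _ h₁ h₂ := ⟨θ.trans _ _ _ h₁.1 h₂.1, φ.trans _ _ _ h₁.2 h₂.2⟩
  compat f ts us h :=
    ⟨θ.compat f ts us fun i => (h i).1, φ.compat f ts us fun i => (h i).2⟩

/-- Join in the congruence lattice. -/
def Con.sup {S : Sig} {A : Alg S} (θ φ : Con A) : Con A :=
  cg {p | θ.rel p.1 p.2 ∨ φ.rel p.1 p.2}

/-- Join of a family in the congruence lattice. -/
def Con.iSup {S : Sig} {A : Alg S} {ι : Type} (f : ι → Con A) : Con A :=
  cg {p | ∃ i, (f i).rel p.1 p.2}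

/-- Inclusion of congruences. -/
def conLE {S : Sig} {A : Alg S} (θ φ : Con A) : Prop := ∀ a b, θ.rel a b → φ.rel a b

/-- Relational composition `r ∘ s`. -/
def relComp {α : Type} (r s : α → α → Prop) : α → α → Prop :=
  fun a b => ∃ c, r a c ∧ s c b

/-- `θ` and `θs` are complementary factor congruences: θ ∩ θ* = Δ and θ ∘ θ* = ∇. -/
def AreCompFC {S : Sig} {A : Alg S} (θ θs : Con A) : Prop :=
  (∀ a b, θ.rel a b → θs.rel a b → a = b) ∧ (∀ a b, relComp θ.rel θs.rel a b)

/-- The set of factor congruences of an algebra. -/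
def FC {S : Sig} (A : Alg S) : Set (Con A) := {θ | ∃ θs, AreCompFC θ θs}

/-- `FC(A)` is a distributive sublattice of `Con(A)`. -/
def HasBFC {S : Sig} (A : Alg S) : Prop :=
  (∀ θ φ, θ ∈ FC A → φ ∈ FC A → θ.inf φ ∈ FC A) ∧
  (∀ θ φ, θ ∈ FC A → φ ∈ FC A → θ.sup φ ∈ FC A) ∧
  (∀ θ φ ψ, θ ∈ FC A → φ ∈ FC A → ψ ∈ FC A →
    θ.inf (φ.sup ψ) = (θ.inf φ).sup (θ.inf ψ))

/-- The variety axiomatized by `E` has Boolean factor congruences. -/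
def BFC {S : Sig} (E : Set (Tm S ℕ × Tm S ℕ)) : Prop :=
  ∀ A : Alg S, InV E A → HasBFC A

/-- Direct product of two algebras. -/
def Alg.prod {S : Sig} (A B : Alg S) : Alg S where
  carrier := A.carrier × B.carrier
  interp f xs := (A.interp f (fun i => (xs i).1), B.interp f (fun i => (xs i).2))

/-- Direct product of a family of algebras. -/
def Alg.pi {S : Sig} {ι : Type} (A : ι → Alg S) : Alg S where
  carrier := ∀ i, (A i).carrier
  interp f xs i := (A i).interp f (fun j => (xs j) i)

/-- First-order formulas over a purely functional signature, with `k` free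
variables (de Bruijn style: `all` binds a new last variable).  Negation,
conjunction, disjunction and existential quantification are definable from
`falsum`, `imp` and `all`, so this captures full first-order logic. -/
inductive Fml (S : Sig) : ℕ → Type
  | eq {k : ℕ} : Tm S (Fin k) → Tm S (Fin k) → Fml S k
  | falsum {k : ℕ} : Fml S k
  | imp {k : ℕ} : Fml S k → Fml S k → Fml S k
  | all {k : ℕ} : Fml S (k + 1) → Fml S k

/-- Tarskian satisfaction of a first-order formula in an algebra. -/
def Fml.realize {S : Sig} (A : Alg S) : ∀ {k : ℕ}, Fml S k → (Fin k → A.carrier) → Prop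
  | _, .eq t u, v => Tm.eval A v t = Tm.eval A v u
  | _, .falsum, _ => False
  | _, .imp f g, v => Fml.realize A f v → Fml.realize A g v
  | _, .all f, v => ∀ a : A.carrier, Fml.realize A f (Fin.snoc v a)

/-- A formula is preserved by direct products. -/
def PreservedByProducts {S : Sig} {l : ℕ} (φ : Fml S l) : Prop :=
  ∀ (ι : Type) (A : ι → Alg S) (v : Fin l → (Alg.pi A).carrier),
    (∀ i, φ.realize (A i) (fun m => v m i)) → φ.realize (Alg.pi A) v

/-- A formula is preserved by direct factors. -/
def PreservedByFactors {S : Sig} {l : ℕ} (φ : Fml S l) : Prop :=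
  ∀ (A B : Alg S) (v : Fin l → (A.prod B).carrier),
    φ.realize (A.prod B) v →
      φ.realize A (fun m => (v m).1) ∧ φ.realize B (fun m => (v m).2)

/-! ### Tuples `(x, y, z, w, x₁, y₁, …, xₙ, yₙ)` and the maps σ, σ*, ρ, ρ* -/

/-- The tuple `(x, y, z, w, x₁, y₁, x₂, y₂, …)` as an assignment of variables:
variable `0 ↦ x`, `1 ↦ y`, `2 ↦ z`, `3 ↦ w`, `4 + 2m ↦ xs m`, `5 + 2m ↦ ys m`. -/
def tup {α : Type} (x y z w : α) (xs ys : ℕ → α) : ℕ → α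
  | 0 => x
  | 1 => y
  | 2 => z
  | 3 => w
  | m + 4 => if m % 2 = 0 then xs (m / 2) else ys (m / 2)

/-- Extend a tuple `Fin n → α` to all of `ℕ` by a default value. -/
def extN {α : Type} {n : ℕ} (dflt : α) (f : Fin n → α) : ℕ → α :=
  fun m => if h : m < n then f ⟨m, h⟩ else dflt

/-- Evaluate a term of arity `m` at (the first `m` entries of) a tuple. -/
def evalAt {S : Sig} (A : Alg S) {m : ℕ} (u : Tm S (Fin m)) (X : ℕ → A.carrier) :
    A.carrier :=
  Tm.eval A (fun i => X i.val) u

/-- The set of pairs of corresponding components of two tuples of length `len`;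
`Cg(X⃗, Y⃗)` is `cg (tupPairs X Y len)`. -/
def tupPairs {α : Type} (X Y : ℕ → α) (len : ℕ) : Set (α × α) :=
  {p | ∃ m, m < len ∧ p = (X m, Y m)}

/-- The recursively computed `x`-row: `row j = (u j)(h1,h2,h3,h4,row 0,ys 0,…,
row (j-1), ys (j-1))`.  `recRowX A u h1 h2 h3 h4 ys j m` is the value of the row
at index `m`, computed after `j` recursion steps (only the values at `m < j`
are meaningful; later steps never change them). -/
def recRowX {S : Sig} (A : Alg S) {n : ℕ} (u : ∀ j : Fin n, Tm S (Fin (4 + 2 * j.val)))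
    (h1 h2 h3 h4 : A.carrier) (ys : ℕ → A.carrier) : ℕ → ℕ → A.carrier
  | 0, _ => h1
  | j + 1, m =>
    if m = j then
      if h : j < n then
        Tm.eval A (fun i => tup h1 h2 h3 h4 (recRowX A u h1 h2 h3 h4 ys j) ys i.val)
          (u ⟨j, h⟩)
      else h1
    else recRowX A u h1 h2 h3 h4 ys j m

/-- The recursively computed `y`-row (the `x`-row being fixed). -/
def recRowY {S : Sig} (A : Alg S) {n : ℕ} (u : ∀ j : Fin n, Tm S (Fin (4 + 2 * j.val)))
    (h1 h2 h3 h4 : A.carrier) (xs : ℕ → A.carrier) : ℕ → ℕ → A.carrier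
  | 0, _ => h1
  | j + 1, m =>
    if m = j then
      if h : j < n then
        Tm.eval A (fun i => tup h1 h2 h3 h4 xs (recRowY A u h1 h2 h3 h4 xs j) i.val)
          (u ⟨j, h⟩)
      else h1
    else recRowY A u h1 h2 h3 h4 xs j m

/-- The tuple `σ(X⃗)`: heads `(x, y, x, y)`, `y`-row unchanged, `x`-row computed
recursively by the terms `s`. -/
def sigmaT {S : Sig} (A : Alg S) {n : ℕ} (s : ∀ j : Fin n, Tm S (Fin (4 + 2 * j.val)))
    (x y z w : A.carrier) (xs ys : ℕ → A.carrier) : ℕ → A.carrier :=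
  tup x y x y (recRowX A s x y x y ys n) ys

/-- The tuple `σ*(X⃗)`: heads `(x, x, z, w)`, `y`-row unchanged, `x`-row computed
recursively by the terms `t`. -/
def sigmaStarT {S : Sig} (A : Alg S) {n : ℕ} (t : ∀ j : Fin n, Tm S (Fin (4 + 2 * j.val)))
    (x y z w : A.carrier) (xs ys : ℕ → A.carrier) : ℕ → A.carrier :=
  tup x x z w (recRowX A t x x z w ys n) ys

/-- The tuple `ρ(X⃗)`: heads `(x, y, z, z)`, `x`-row unchanged, `y`-row computed
recursively by the terms `s`. -/
def rhoT {S : Sig} (A : Alg S) {n : ℕ} (s : ∀ j : Fin n, Tm S (Fin (4 + 2 * j.val)))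
    (x y z w : A.carrier) (xs ys : ℕ → A.carrier) : ℕ → A.carrier :=
  tup x y z z xs (recRowY A s x y z z xs n)

/-- The tuple `ρ*(X⃗)`: heads `(x, y, z, w)`, `x`-row unchanged, `y`-row computed
recursively by the terms `t`. -/
def rhoStarT {S : Sig} (A : Alg S) {n : ℕ} (t : ∀ j : Fin n, Tm S (Fin (4 + 2 * j.val)))
    (x y z w : A.carrier) (xs ys : ℕ → A.carrier) : ℕ → A.carrier :=
  tup x y z w xs (recRowY A t x y z w xs n)

/-- The pair of relations `(δ_m, ε_m)` determined by congruences θ, θ*, φ, φ*: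
`δ₀ = ε₀ = Δ`, `δ_{m+1} = (θ ∘ ε_m) ∩ (θ* ∘ ε_m)`,
`ε_{m+1} = (φ ∘ δ_m) ∩ (φ* ∘ δ_m)`. -/
def deltaEps {S : Sig} {A : Alg S} (θ θs φ φs : Con A) :
    ℕ → (A.carrier → A.carrier → Prop) × (A.carrier → A.carrier → Prop)
  | 0 => (Eq, Eq)
  | m + 1 =>
    let p := deltaEps θ θs φ φs m
    (fun a b => relComp θ.rel p.2 a b ∧ relComp θs.rel p.2 a b,
     fun a b => relComp φ.rel p.1 a b ∧ relComp φs.rel p.1 a b)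

/-- Willard's congruence-theoretic condition (Corollary on Willard terms): for
every algebra in the variety, all congruences θ, θ*, φ, φ* and every tuple, if
`Cg(X⃗,σ(X⃗)) ⊆ θ`, `Cg(X⃗,σ*(X⃗)) ⊆ θ*`, `Cg(X⃗,ρ(X⃗)) ⊆ φ` and
`Cg(X⃗,ρ*(X⃗)) ⊆ φ*` then `(x, y) ∈ φ ∘ δ_N`. -/
def MalcevRelCondition {S : Sig} (E : Set (Tm S ℕ × Tm S ℕ)) (N n : ℕ)
    (s t : ∀ j : Fin n, Tm S (Fin (4 + 2 * j.val))) : Prop :=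
  ∀ A : Alg S, InV E A → ∀ θ θs φ φs : Con A,
    ∀ x y z w : A.carrier, ∀ xs ys : Fin n → A.carrier,
      conLE (cg (tupPairs (tup x y z w (extN x xs) (extN x ys))
        (sigmaT A s x y z w (extN x xs) (extN x ys)) (4 + 2 * n))) θ →
      conLE (cg (tupPairs (tup x y z w (extN x xs) (extN x ys))
        (sigmaStarT A t x y z w (extN x xs) (extN x ys)) (4 + 2 * n))) θs →
      conLE (cg (tupPairs (tup x y z w (extN x xs) (extN x ys))
        (rhoT A s x y z w (extN x xs) (extN x ys)) (4 + 2 * n))) φ →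
      conLE (cg (tupPairs (tup x y z w (extN x xs) (extN x ys))
        (rhoStarT A t x y z w (extN x xs) (extN x ys)) (4 + 2 * n))) φs →
      relComp φ.rel (deltaEps θ θs φ φs N).1 x y

/-! ### The Mal'cev condition for BFC: words and the terms `L_α`, `R_α` -/

/-- A word over the alphabet `{1, …, N}`. -/
def IsWord (N : ℕ) (α : List ℕ) : Prop := ∀ j ∈ α, 1 ≤ j ∧ j ≤ N

/-- The chain of identities associated with a word `α` (with `N = 2k`) and a
pair of tuples `Y` and `Ys` (which will be `ρ(X⃗), ρ*(X⃗)` or `σ(X⃗), σ*(X⃗)`). -/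
def ChainCond {S : Sig} (A : Alg S) {n : ℕ} (k : ℕ)
    (L R : List ℕ → Tm S (Fin (4 + 2 * n))) (α : List ℕ)
    (Y Ys : ℕ → A.carrier) : Prop :=
  evalAt A (L α) Y = evalAt A (L (α ++ [1])) Y ∧
  (∀ j, 1 ≤ j → j ≤ k - 1 →
    evalAt A (R (α ++ [j])) Y = evalAt A (L (α ++ [j + 1])) Y) ∧
  evalAt A (R (α ++ [k])) Y = evalAt A (R α) Y ∧
  evalAt A (L α) Ys = evalAt A (L (α ++ [k + 1])) Ys ∧
  (∀ j, k + 1 ≤ j → j ≤ 2 * k - 1 →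
    evalAt A (R (α ++ [j])) Ys = evalAt A (L (α ++ [j + 1])) Ys) ∧
  evalAt A (R (α ++ [2 * k])) Ys = evalAt A (R α) Ys

/-- `(N = 2k, n, s, t, L, R)` witness the BFC Mal'cev condition for the variety
axiomatized by `E`. -/
def MalcevWitness {S : Sig} (E : Set (Tm S ℕ × Tm S ℕ)) (k n : ℕ)
    (s t : ∀ j : Fin n, Tm S (Fin (4 + 2 * j.val)))
    (L R : List ℕ → Tm S (Fin (4 + 2 * n))) : Prop :=
  0 < k ∧ 0 < n ∧
  ∀ A : Alg S, InV E A → ∀ (x y z w : A.carrier) (xs ys : ℕ → A.carrier),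
    (∀ α : List ℕ, IsWord (2 * k) α → α.length = 2 * k →
      evalAt A (L α) (rhoT A s x y z w xs ys) =
        evalAt A (R α) (rhoT A s x y z w xs ys) ∧
      evalAt A (L α) (rhoStarT A t x y z w xs ys) =
        evalAt A (R α) (rhoStarT A t x y z w xs ys)) ∧
    (x = evalAt A (L []) (tup x y z w xs ys)) ∧
    (y = evalAt A (R []) (tup x y z w xs ys)) ∧
    (evalAt A (L []) (rhoT A s x y z w xs ys) =
      evalAt A (L [1]) (rhoT A s x y z w xs ys)) ∧
    (∀ j, 1 ≤ j → j ≤ 2 * k - 1 →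
      evalAt A (R [j]) (rhoT A s x y z w xs ys) =
        evalAt A (L [j + 1]) (rhoT A s x y z w xs ys)) ∧
    (evalAt A (R [2 * k]) (rhoT A s x y z w xs ys) =
      evalAt A (R []) (rhoT A s x y z w xs ys)) ∧
    (∀ α : List ℕ, IsWord (2 * k) α → α ≠ [] → α.length < 2 * k →
      α.length % 2 = 0 →
      ChainCond A k L R α (rhoT A s x y z w xs ys) (rhoStarT A t x y z w xs ys)) ∧
    (∀ α : List ℕ, IsWord (2 * k) α → α ≠ [] → α.length < 2 * k →
      α.length % 2 = 1 →
      ChainCond A k L R α (sigmaT A s x y z w xs ys) (sigmaStarT A t x y z w xs ys))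

/-! ### The formulas Ψ_m, Φ₁ and Φ₂ -/

/-- Alternating quantifier prefix `∃ u₁ ∀ v₁ … ∃ uₘ ∀ vₘ, P [u₁, v₁, …, uₘ, vₘ]`
(the accumulator collects the quantified elements in order). -/
def altQ {α : Type} (P : List α → Prop) : ℕ → List α → Prop
  | 0, acc => P acc
  | m + 1, acc => ∃ u : α, ∀ v : α, altQ P m (acc ++ [u, v])

/-- The (realization of the) formula `Ψ_m`: for every word `α` of length `m`,
if `L_{αγ} = R_{αγ}` for all nonempty `γ` with `|αγ| ≤ N`, then `L_α = R_α`. -/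
def Psi {S : Sig} (A : Alg S) {n : ℕ} (N : ℕ)
    (L R : List ℕ → Tm S (Fin (4 + 2 * n))) (m : ℕ) (X : ℕ → A.carrier) : Prop :=
  ∀ α : List ℕ, IsWord N α → α.length = m →
    ((∀ γ : List ℕ, IsWord N γ → γ ≠ [] → (α ++ γ).length ≤ N →
        evalAt A (L (α ++ γ)) X = evalAt A (R (α ++ γ)) X) →
      evalAt A (L α) X = evalAt A (R α) X)

/-- Realization of `Φ₁(x,y,z,w) = ∃y₁∀x₁ ⋯ ∃yₙ∀xₙ ⋀_{m=1}^{k} Ψ_{2m}`. -/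
def Phi1 {S : Sig} (A : Alg S) (k n : ℕ)
    (L R : List ℕ → Tm S (Fin (4 + 2 * n))) (x y z w : A.carrier) : Prop :=
  altQ (fun acc =>
    ∀ m, 1 ≤ m → m ≤ k →
      Psi A (2 * k) L R (2 * m)
        (tup x y z w (fun i => acc.getD (2 * i + 1) x) (fun i => acc.getD (2 * i) x)))
    n []

/-- Realization of `Φ₂(x,y,z,w) = ∃x₁∀y₁ ⋯ ∃xₙ∀yₙ ⋀_{m=1}^{k} Ψ_{2m-1}`. -/
def Phi2 {S : Sig} (A : Alg S) (k n : ℕ)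
    (L R : List ℕ → Tm S (Fin (4 + 2 * n))) (x y z w : A.carrier) : Prop :=
  altQ (fun acc =>
    ∀ m, 1 ≤ m → m ≤ k →
      Psi A (2 * k) L R (2 * m - 1)
        (tup x y z w (fun i => acc.getD (2 * i) x) (fun i => acc.getD (2 * i + 1) x)))
    n []

/-- `Γ^A(a,b,c,d)`: every factor congruence containing `(c,d)` contains `(a,b)`. -/
def Gamma {S : Sig} (A : Alg S) (a b c d : A.carrier) : Prop :=
  ∀ θ ∈ FC A, θ.rel c d → θ.rel a b


/-! ### Auxiliary lemmas for statement1 -/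

theorem Con.ext' {S : Sig} {A : Alg S} {θ φ : Con A}
    (h : ∀ a b, θ.rel a b ↔ φ.rel a b) : θ = φ := by
  have hrel : θ.rel = φ.rel := funext fun a => funext fun b => propext (h a b)
  cases θ; cases φ
  simp only at hrel
  subst hrel
  rfl

theorem eval_rel {S : Sig} {A : Alg S} {V : Type} (ψ : Con A)
    (v w : V → A.carrier) (h : ∀ i, ψ.rel (v i) (w i)) :
    ∀ u : Tm S V, ψ.rel (Tm.eval A v u) (Tm.eval A w u)
  | .var i => h i
  | .app f ts => ψ.compat f _ _ (fun i => eval_rel ψ v w h (ts i))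

theorem tup_even {α : Type} (x y z w : α) (xs ys : ℕ → α) (k : ℕ) :
    tup x y z w xs ys (4 + 2 * k) = xs k := by
  have h : 4 + 2 * k = (2 * k) + 4 := by omega
  rw [h]
  show (if (2 * k) % 2 = 0 then xs (2 * k / 2) else ys (2 * k / 2)) = xs k
  have h1 : (2 * k) % 2 = 0 := by omega
  have h2 : 2 * k / 2 = k := by omega
  simp [h1, h2]

theorem tup_odd {α : Type} (x y z w : α) (xs ys : ℕ → α) (k : ℕ) :
    tup x y z w xs ys (4 + (2 * k + 1)) = ys k := by
  have h : 4 + (2 * k + 1) = (2 * k + 1) + 4 := by omega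
  rw [h]
  show (if (2 * k + 1) % 2 = 0 then xs ((2 * k + 1) / 2) else ys ((2 * k + 1) / 2)) = ys k
  have h1 : (2 * k + 1) % 2 = 1 := by omega
  have h2 : (2 * k + 1) / 2 = k := by omega
  simp [h1, h2]

theorem tup_rel {S : Sig} {A : Alg S} (ψ : Con A)
    {x y z w x' y' z' w' : A.carrier} {xs ys xs' ys' : ℕ → A.carrier} {i : ℕ}
    (hx : ψ.rel x x') (hy : ψ.rel y y') (hz : ψ.rel z z') (hw : ψ.rel w w')
    (hxs : ∀ k, k < i → ψ.rel (xs k) (xs' k))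
    (hys : ∀ k, k < i → ψ.rel (ys k) (ys' k)) :
    ∀ m, m < 4 + 2 * i →
      ψ.rel (tup x y z w xs ys m) (tup x' y' z' w' xs' ys' m)
  | 0, _ => hx
  | 1, _ => hy
  | 2, _ => hz
  | 3, _ => hw
  | m + 4, hm => by
    show ψ.rel (if m % 2 = 0 then xs (m / 2) else ys (m / 2))
         (if m % 2 = 0 then xs' (m / 2) else ys' (m / 2))
    split
    · exact hxs (m / 2) (by omega)
    · exact hys (m / 2) (by omega)

theorem recRowX_stable {S : Sig} (A : Alg S) {n : ℕ}
    (u : ∀ j : Fin n, Tm S (Fin (4 + 2 * j.val)))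
    (h1 h2 h3 h4 : A.carrier) (ys : ℕ → A.carrier) :
    ∀ j' j m, m < j → j ≤ j' →
      recRowX A u h1 h2 h3 h4 ys j' m = recRowX A u h1 h2 h3 h4 ys j m := by
  intro j'
  induction j' with
  | zero => intro j m hm hj; omega
  | succ j' ih =>
    intro j m hm hj
    rcases Nat.eq_or_lt_of_le hj with h | h
    · rw [h]
    · have hj' : j ≤ j' := by omega
      have hne : m ≠ j' := by omega
      show (if m = j' then _ else recRowX A u h1 h2 h3 h4 ys j' m) = _
      rw [if_neg hne]
      exact ih j m hm hj'

theorem recRowX_eq {S : Sig} (A : Alg S) {n : ℕ}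
    (u : ∀ j : Fin n, Tm S (Fin (4 + 2 * j.val)))
    (h1 h2 h3 h4 : A.carrier) (ys : ℕ → A.carrier) (m : ℕ) (hm : m < n) :
    recRowX A u h1 h2 h3 h4 ys n m =
      Tm.eval A (fun i => tup h1 h2 h3 h4 (recRowX A u h1 h2 h3 h4 ys m) ys i.val)
        (u ⟨m, hm⟩) := by
  rw [recRowX_stable A u h1 h2 h3 h4 ys n (m + 1) m (by omega) hm]
  show (if m = m then _ else _) = _
  rw [if_pos rfl, dif_pos hm]

theorem extN_lt {α : Type} {n : ℕ} (dflt : α) (f : Fin n → α) (k : ℕ) (hk : k < n) :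
    extN dflt f k = f ⟨k, hk⟩ := by
  simp [extN, hk]

/-- Key lemma B: the recursively computed row entry is congruent to the
evaluation of `s i` at the original tuple. -/
theorem keyB {S : Sig} (A : Alg S) {n : ℕ}
    (s : ∀ j : Fin n, Tm S (Fin (4 + 2 * j.val)))
    (a b c d : A.carrier) (ai bi : Fin n → A.carrier)
    (ψ : Con A) (hac : ψ.rel a c) (hbd : ψ.rel b d)
    (i : ℕ) (hi : i < n)
    (hrow : ∀ k, k < i →
      ψ.rel (recRowX A s a b a b (extN a bi) n k) (extN a ai k)) :
    ψ.rel (recRowX A s a b a b (extN a bi) n i)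
      (evalAt A (s ⟨i, hi⟩) (tup a b c d (extN a ai) (extN a bi))) := by
  rw [recRowX_eq A s a b a b (extN a bi) i hi]
  apply eval_rel
  intro idx
  apply tup_rel ψ (ψ.refl a) (ψ.refl b) hac hbd
    (fun k hk => ?_) (fun k _ => ψ.refl _) idx.val idx.isLt
  rw [← recRowX_stable A s a b a b (extN a bi) n i k hk (le_of_lt hi)]
  exact hrow k hk

/-- Key lemma for direction 1 (strong induction): in any congruence containing
the left-hand generators, each `aᵢ` is related to the recursive row entry. -/
theorem key1 {S : Sig} (A : Alg S) {n : ℕ}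
    (s : ∀ j : Fin n, Tm S (Fin (4 + 2 * j.val)))
    (a b c d : A.carrier) (ai bi : Fin n → A.carrier)
    (ψ : Con A) (hac : ψ.rel a c) (hbd : ψ.rel b d)
    (hgen : ∀ i : Fin n,
      ψ.rel (ai i) (evalAt A (s i) (tup a b c d (extN a ai) (extN a bi)))) :
    ∀ k, k < n → ψ.rel (extN a ai k) (recRowX A s a b a b (extN a bi) n k) := by
  intro k
  induction k using Nat.strong_induction_on with
  | _ k IH =>
    intro hk
    have hB := keyB A s a b c d ai bi ψ hac hbd k hk
      (fun j hj => ψ.symm _ _ (IH j hj (by omega)))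
    have hg := hgen ⟨k, hk⟩
    rw [extN_lt a ai k hk]
    exact ψ.trans _ _ _ hg (ψ.symm _ _ hB)

theorem cgPair_self {S : Sig} (A : Alg S) (u v : A.carrier) :
    (cgPair A u v).rel u v :=
  fun θ h => h (u, v) rfl

/-- **Lemma (first identity).**  `Cg(a,c) ∨ Cg(b,d) ∨ ⋁ᵢ Cg(aᵢ, sᵢ(a,b,c,d,a₁,b₁,…,a_{i-1},b_{i-1}))
= Cg(X⃗, σ(X⃗))` in `Con(A)`. -/
theorem statement1 {S : Sig} (A : Alg S) (n : ℕ) (hn : 1 ≤ n)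
    (s t : ∀ j : Fin n, Tm S (Fin (4 + 2 * j.val)))
    (a b c d : A.carrier) (ai bi : Fin n → A.carrier) :
    Con.sup (cgPair A a c)
      (Con.sup (cgPair A b d)
        (Con.iSup (fun i : Fin n =>
          cgPair A (ai i)
            (evalAt A (s i) (tup a b c d (extN a ai) (extN a bi)))))) =
    cg (tupPairs (tup a b c d (extN a ai) (extN a bi))
        (sigmaT A s a b c d (extN a ai) (extN a bi)) (4 + 2 * n)) := by
  set X : ℕ → A.carrier := tup a b c d (extN a ai) (extN a bi) with hX
  set Y : ℕ → A.carrier := sigmaT A s a b c d (extN a ai) (extN a bi) with hY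
  set rhs : Con A := cg (tupPairs X Y (4 + 2 * n)) with hrhs
  set lhs : Con A := Con.sup (cgPair A a c)
      (Con.sup (cgPair A b d)
        (Con.iSup (fun i : Fin n =>
          cgPair A (ai i) (evalAt A (s i) X)))) with hlhs
  -- basic relations in lhs
  have lac : lhs.rel a c := fun ψ h => h (a, c) (Or.inl (cgPair_self A a c))
  have lbd : lhs.rel b d := fun ψ h =>
    h (b, d) (Or.inr (fun ψ' h' => h' (b, d) (Or.inl (cgPair_self A b d))))
  have lgen : ∀ i : Fin n, lhs.rel (ai i) (evalAt A (s i) X) := fun i ψ h =>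
    h (ai i, evalAt A (s i) X)
      (Or.inr (fun ψ' h' => h' _ (Or.inr (fun ψ'' h'' => h'' _ ⟨i, cgPair_self A _ _⟩))))
  -- generator pairs of rhs
  have rgen : ∀ m, m < 4 + 2 * n → rhs.rel (X m) (Y m) := fun m hm θ hθ =>
    hθ (X m, Y m) ⟨m, hm, rfl⟩
  have rY2 : Y 2 = a := rfl
  have rY3 : Y 3 = b := rfl
  have rac : rhs.rel a c := rhs.symm _ _ (rgen 2 (by omega))
  have rbd : rhs.rel b d := rhs.symm _ _ (rgen 3 (by omega))
  have hXeven : ∀ i : Fin n, X (4 + 2 * i.val) = ai i := by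
    intro i
    rw [hX, tup_even, extN_lt a ai i.val i.isLt]
  have hYeven : ∀ i : Fin n,
      Y (4 + 2 * i.val) = recRowX A s a b a b (extN a bi) n i.val := by
    intro i
    rw [hY]
    exact tup_even _ _ _ _ _ _ _
  have rrow : ∀ i : Fin n,
      rhs.rel (ai i) (recRowX A s a b a b (extN a bi) n i.val) := by
    intro i
    have := rgen (4 + 2 * i.val) (by omega)
    rwa [hXeven i, hYeven i] at this
  apply Con.ext'
  intro p q
  constructor
  · -- lhs ≤ rhs
    intro hpq
    apply hpq rhs
    rintro ⟨u, v⟩ h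
    rcases h with h | h
    · -- cgPair a c
      exact h rhs (fun r hr => by rw [hr]; exact rac)
    · apply h rhs
      rintro ⟨u', v'⟩ h'
      rcases h' with h' | h'
      · exact h' rhs (fun r hr => by rw [hr]; exact rbd)
      · apply h' rhs
        rintro ⟨u'', v''⟩ ⟨i, hi⟩
        apply hi rhs
        rintro r hr
        rw [hr]
        show rhs.rel (ai i) (evalAt A (s i) X)
        have hB := keyB A s a b c d ai bi rhs rac rbd i.val i.isLt
          (fun k hk => by
            rw [extN_lt a ai k (by omega)]
            exact rhs.symm _ _ (rrow ⟨k, by omega⟩))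
        have : (⟨i.val, i.isLt⟩ : Fin n) = i := rfl
        rw [this] at hB
        exact rhs.trans _ _ _ (rrow i) hB
  · -- rhs ≤ lhs
    intro hpq
    apply hpq lhs
    rintro ⟨u, v⟩ ⟨m, hm, hp⟩
    rw [Prod.mk.injEq] at hp
    rw [hp.1, hp.2]
    have hrow1 : ∀ k, k < n →
        lhs.rel (extN a ai k) (recRowX A s a b a b (extN a bi) n k) :=
      key1 A s a b c d ai bi lhs lac lbd lgen
    match m, hm with
    | 0, _ => exact lhs.refl a
    | 1, _ => exact lhs.refl b
    | 2, _ => exact lhs.symm _ _ lac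
    | 3, _ => exact lhs.symm _ _ lbd
    | m + 4, hm =>
      show lhs.rel (tup a b c d (extN a ai) (extN a bi) (m + 4))
        (tup a b a b (recRowX A s a b a b (extN a bi) n) (extN a bi) (m + 4))
      show lhs.rel (if m % 2 = 0 then extN a ai (m / 2) else extN a bi (m / 2))
        (if m % 2 = 0 then recRowX A s a b a b (extN a bi) n (m / 2)
          else extN a bi (m / 2))
      split
      · exact hrow1 (m / 2) (by omega)
      · exact lhs.refl _

end UA
end

section
/- Let V be a variety and suppose (N = 2k, n, sᵢ, tᵢ, L_α, R_α) witness the BFC Mal'cev condition for V. Then V ⊨ Φ₁(x,y,z,w) for all values of x,y,z,w; that is, every algebra in V satisfies the sentence ∀x∀y∀z∀w Φ₁(x,y,z,w). -/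
set_option linter.unusedVariables false

namespace UA

section AuxLemmas

variable {S : Sig} (A : Alg S) {n : ℕ} (u : ∀ j : Fin n, Tm S (Fin (4 + 2 * j.val)))
  (h1 h2 h3 h4 : A.carrier)

lemma recRowY_ge (xs : ℕ → A.carrier) :
    ∀ j m, j ≤ m → recRowY A u h1 h2 h3 h4 xs j m = h1
  | 0, _, _ => rfl
  | j+1, m, h => by
      simp only [recRowY]
      rw [if_neg (by omega)]
      exact recRowY_ge xs j m (by omega)

lemma recRowY_stab (xs : ℕ → A.carrier) : ∀ j m, m < j →
    recRowY A u h1 h2 h3 h4 xs j m = recRowY A u h1 h2 h3 h4 xs (m+1) m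
  | 0, m, h => absurd h (by omega)
  | j+1, m, h => by
      by_cases hm : m = j
      · subst hm; rfl
      · have hstep : recRowY A u h1 h2 h3 h4 xs (j+1) m = recRowY A u h1 h2 h3 h4 xs j m := by
          simp only [recRowY]
          rw [if_neg hm]
        rw [hstep]
        exact recRowY_stab xs j m (by omega)

lemma tup_congr {α : Type} {x y z w : α} {xs ys xs' ys' : ℕ → α} (m : ℕ) (bound : ℕ)
    (hm : m < 4 + 2*bound)
    (hxs : ∀ i, i < bound → xs i = xs' i) (hys : ∀ i, i < bound → ys i = ys' i) :
    tup x y z w xs ys m = tup x y z w xs' ys' m := by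
  match m with
  | 0 | 1 | 2 | 3 => rfl
  | (m+4) =>
    simp only [tup]
    split
    · exact hxs (m/2) (by omega)
    · exact hys (m/2) (by omega)

lemma recRowY_congr (xs xs' : ℕ → A.carrier) :
    ∀ j, (∀ i, i + 1 < j → xs i = xs' i) →
    ∀ m, recRowY A u h1 h2 h3 h4 xs j m = recRowY A u h1 h2 h3 h4 xs' j m
  | 0, _, _ => rfl
  | j+1, hag, m => by
      have inner := recRowY_congr xs xs' j (fun i hi => hag i (by omega))
      simp only [recRowY]
      by_cases hm : m = j
      · rw [if_pos hm, if_pos hm]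
        by_cases hj : j < n
        · rw [dif_pos hj, dif_pos hj]
          congr 1
          funext i
          exact tup_congr i.val j i.isLt (fun i' hi' => hag i' (by omega))
            (fun i' hi' => inner i')
        · rw [dif_neg hj, dif_neg hj]
      · rw [if_neg hm, if_neg hm]
        exact inner m

end AuxLemmas

lemma psi_rhoStar {S : Sig} {E : Set (Tm S ℕ × Tm S ℕ)} {k n : ℕ}
    {s t : ∀ j : Fin n, Tm S (Fin (4 + 2 * j.val))}
    {L R : List ℕ → Tm S (Fin (4 + 2 * n))}
    (hW : MalcevWitness E k n s t L R) (A : Alg S) (hV : InV E A)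
    (x y z w : A.carrier) (xs ys : ℕ → A.carrier) :
    ∀ m, 1 ≤ m → m ≤ k → Psi A (2*k) L R (2*m) (rhoStarT A t x y z w xs ys) := by
  obtain ⟨hk, hn, hmain⟩ := hW
  obtain ⟨hfull, _, _, _, _, _, heven, _⟩ := hmain A hV x y z w xs ys
  intro m hm1 hmk α hword hlen H
  by_cases hcase : m = k
  · exact (hfull α hword (by omega)).2
  · have hlt : 2*m < 2*k := by omega
    have chain := heven α hword
      (by intro hnil; subst hnil; simp at hlen; omega) (by omega) (by omega)
    obtain ⟨_, _, _, c4, c5, c6⟩ := chain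
    have Hj : ∀ j, 1 ≤ j → j ≤ 2*k →
        evalAt A (L (α ++ [j])) (rhoStarT A t x y z w xs ys) =
          evalAt A (R (α ++ [j])) (rhoStarT A t x y z w xs ys) := by
      intro j hj1 hj2
      refine H [j] ?_ (by simp) (by simp [hlen]; omega)
      intro e he
      simp at he
      omega
    have aux : ∀ d, k+1+d ≤ 2*k →
        evalAt A (L α) (rhoStarT A t x y z w xs ys) =
          evalAt A (L (α ++ [k+1+d])) (rhoStarT A t x y z w xs ys) := by
      intro d
      induction d with
      | zero => intro _; exact c4
      | succ d ih =>
        intro hd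
        have ih' := ih (by omega)
        rw [ih', Hj (k+1+d) (by omega) (by omega)]
        have e : k+1+(d+1) = (k+1+d)+1 := by omega
        rw [e]
        exact c5 (k+1+d) (by omega) (by omega)
    have h2k : k+1+(k-1) = 2*k := by omega
    calc evalAt A (L α) (rhoStarT A t x y z w xs ys)
        = evalAt A (L (α ++ [2*k])) (rhoStarT A t x y z w xs ys) := by
          have := aux (k-1) (by omega); rwa [h2k] at this
      _ = evalAt A (R (α ++ [2*k])) (rhoStarT A t x y z w xs ys) :=
          Hj (2*k) (by omega) le_rfl
      _ = evalAt A (R α) (rhoStarT A t x y z w xs ys) := c6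

/-- **Lemma.**  If `(N = 2k, n, sᵢ, tᵢ, L_α, R_α)` witness the BFC Mal'cev
condition for the variety, then `V ⊨ Φ₁(x,y,z,w)` for all `x, y, z, w`. -/
theorem statement10 {S : Sig} (E : Set (Tm S ℕ × Tm S ℕ)) (k n : ℕ)
    (s t : ∀ j : Fin n, Tm S (Fin (4 + 2 * j.val)))
    (L R : List ℕ → Tm S (Fin (4 + 2 * n)))
    (hW : MalcevWitness E k n s t L R) :
    ∀ A : Alg S, InV E A → ∀ x y z w : A.carrier, Phi1 A k n L R x y z w := by
  intro A hV x y z w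
  have hn : 0 < n := hW.2.1
  unfold Phi1
  suffices key : ∀ (r j : ℕ) (acc : List A.carrier), j + r = n → acc.length = 2*j →
      (∀ i, i < j → acc.getD (2*i) x =
        recRowY A t x y z w (fun i' => acc.getD (2*i'+1) x) n i) →
      altQ (fun acc => ∀ m, 1 ≤ m → m ≤ k →
        Psi A (2*k) L R (2*m)
          (tup x y z w (fun i => acc.getD (2*i+1) x) (fun i => acc.getD (2*i) x))) r acc by
    exact key n 0 [] (by omega) rfl (by intro i hi; omega)
  intro r
  induction r with
  | zero =>
    intro j acc hj hlen hinv
    have hjn : j = n := by omega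
    rw [hjn] at hinv
    intro m hm1 hmk
    have hXeq : (tup x y z w (fun i => acc.getD (2*i+1) x) (fun i => acc.getD (2*i) x)) =
        rhoStarT A t x y z w (fun i => acc.getD (2*i+1) x) (fun _ => x) := by
      funext mm
      rcases mm with _|_|_|_|mm
      · rfl
      · rfl
      · rfl
      · rfl
      · simp only [rhoStarT, tup]
        split
        · rfl
        · by_cases hlt : mm/2 < n
          · exact hinv (mm/2) hlt
          · rw [List.getD_eq_default _ _ (by omega),
              recRowY_ge A t x y z w _ n (mm/2) (by omega)]
    rw [hXeq]
    exact psi_rhoStar hW A hV x y z w _ _ m hm1 hmk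
  | succ r ih =>
    intro j acc hj hlen hinv
    have hjn : j < n := by omega
    refine ⟨recRowY A t x y z w (fun i' => acc.getD (2*i'+1) x) n j, fun v => ?_⟩
    set u0 := recRowY A t x y z w (fun i' => acc.getD (2*i'+1) x) n j with hu0
    have hXS : ∀ i', i' < j →
        (acc ++ [u0, v]).getD (2*i'+1) x = acc.getD (2*i'+1) x := by
      intro i' hi'
      exact List.getD_append _ _ _ _ (by omega)
    have hrec : ∀ i, i < j + 1 →
        recRowY A t x y z w (fun i' => (acc ++ [u0, v]).getD (2*i'+1) x) n i =
          recRowY A t x y z w (fun i' => acc.getD (2*i'+1) x) n i := by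
      intro i hi
      have hin : i < n := by omega
      rw [recRowY_stab A t x y z w _ n i hin,
          recRowY_stab A t x y z w (fun i' => acc.getD (2*i'+1) x) n i hin]
      exact recRowY_congr A t x y z w _ _ (i+1)
        (fun i'' hi'' => hXS i'' (by omega)) i
    apply ih (j+1) (acc ++ [u0, v]) (by omega)
      (by simp [hlen]; omega)
    intro i hi
    by_cases hij : i < j
    · rw [List.getD_append _ _ _ _ (by omega), hinv i hij, hrec i (by omega)]
    · have hij' : i = j := by omega
      subst hij'
      rw [List.getD_append_right _ _ _ _ (by omega)]
      have : 2*i - acc.length = 0 := by omega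
      rw [this]
      rw [hrec i (by omega)]
      rfl

end UA
end
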